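/- Let g : (0,∞) → ℝ be continuous with g(z) > 0 for all z > 0, and let ψ, φ : (0,∞) → ℝ be twice differentiable solutions of the ODE u''(z) + z(1 − 2g(z))u'(z) − u(z) = 0 on (0,∞) satisfying ψ > 0, φ > 0, ψ' > 0, and φ' < 0 pointwise on (0,∞). Assume ψ and φ extend continuously to 0 with ψ(0+) = φ(0+) = 1, that the one-sided derivatives ψ'(0+) and φ'(0+) exist and are finite, and that p(z) := (z ψ'(z) − ψ(z)) / (z φ'(z) − φ(z)) satisfies lim_{z→∞} p(z) = −∞. Let α ≥ 0, assume 2φ'(0+) − α < 0, and define K := (ψ'(0+) + φ'(0+) − α) / (2φ'(0+) − α). Then K ≤ 1 and there exists a unique A ≥ 0 (with p extended by p(0) := 1) such that p(A) = K. -/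

import Mathlib

open MeasureTheory Set Real Filter

/-- existence and uniqueness of the optimal stopping constant `A ≥ 0`
solving `p(A) = K`, where `p(z) = (zψ'(z)−ψ(z))/(zφ'(z)−φ(z))` (extended by `p(0) = 1`),
`K = (ψ'(0+)+φ'(0+)−α)/(2φ'(0+)−α)`, assuming `g > 0` continuous, `ψ, φ` are positive
increasing/decreasing solutions of `u'' + z(1−2g(z))u' − u = 0` normalized by
`ψ(0+) = φ(0+) = 1` with finite one-sided derivatives at `0`, `p(z) → −∞` as `z → ∞`,
`α ≥ 0`, and `2φ'(0+) − α < 0`; moreover `K ≤ 1`. -/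
theorem optimal_constant_exists_unique
    (g ψ ψ' ψ'' φ φ' φ'' : ℝ → ℝ)
    (hgc : ContinuousOn g (Set.Ioi 0))
    (hg : ∀ z : ℝ, 0 < z → 0 < g z)
    (hψd : ∀ z : ℝ, 0 < z → HasDerivAt ψ (ψ' z) z)
    (hψd2 : ∀ z : ℝ, 0 < z → HasDerivAt ψ' (ψ'' z) z)
    (hψode : ∀ z : ℝ, 0 < z → ψ'' z + z * (1 - 2 * g z) * ψ' z - ψ z = 0)
    (hψpos : ∀ z : ℝ, 0 < z → 0 < ψ z)
    (hψinc : ∀ z : ℝ, 0 < z → 0 < ψ' z)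
    (hφd : ∀ z : ℝ, 0 < z → HasDerivAt φ (φ' z) z)
    (hφd2 : ∀ z : ℝ, 0 < z → HasDerivAt φ' (φ'' z) z)
    (hφode : ∀ z : ℝ, 0 < z → φ'' z + z * (1 - 2 * g z) * φ' z - φ z = 0)
    (hφpos : ∀ z : ℝ, 0 < z → 0 < φ z)
    (hφdec : ∀ z : ℝ, 0 < z → φ' z < 0)
    (hψ0 : Tendsto ψ (nhdsWithin 0 (Set.Ioi 0)) (nhds 1))
    (hφ0 : Tendsto φ (nhdsWithin 0 (Set.Ioi 0)) (nhds 1))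
    (dψ dφ : ℝ)
    (hdψ : Tendsto ψ' (nhdsWithin 0 (Set.Ioi 0)) (nhds dψ))
    (hdφ : Tendsto φ' (nhdsWithin 0 (Set.Ioi 0)) (nhds dφ))
    (p : ℝ → ℝ)
    (hp0 : p 0 = 1)
    (hp : ∀ z : ℝ, 0 < z → p z = (z * ψ' z - ψ z) / (z * φ' z - φ z))
    (hptop : Tendsto p atTop atBot)
    (α K : ℝ) (hα : 0 ≤ α) (hden : 2 * dφ - α < 0)
    (hK : K = (dψ + dφ - α) / (2 * dφ - α)) :
    K ≤ 1 ∧ ∃! A : ℝ, 0 ≤ A ∧ p A = K := by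

  have hne : (nhdsWithin (0:ℝ) (Set.Ioi 0)).NeBot := nhdsGT_neBot 0
  have hdψ0 : 0 ≤ dψ :=
    ge_of_tendsto hdψ (by filter_upwards [self_mem_nhdsWithin] with z hz; exact (hψinc z hz).le)
  have hdφ0 : dφ ≤ 0 :=
    le_of_tendsto hdφ (by filter_upwards [self_mem_nhdsWithin] with z hz; exact (hφdec z hz).le)
  have hKle : K ≤ 1 := by
    have hden' : (2 * dφ - α) ≠ 0 := ne_of_lt hden
    have hKd : K * (2 * dφ - α) = dψ + dφ - α := by
      rw [hK]; exact div_mul_cancel₀ _ hden'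
    nlinarith
  have hD : ∀ z : ℝ, 0 < z → z * φ' z - φ z < 0 := by
    intro z hz
    nlinarith [hφdec z hz, hφpos z hz]
  have hpder : ∀ x : ℝ, 0 < x → HasDerivAt p
      ((x * ψ'' x * (x * φ' x - φ x) - (x * ψ' x - ψ x) * (x * φ'' x)) / (x * φ' x - φ x)^2) x := by
    intro x hx
    have hNd : HasDerivAt (fun z => z * ψ' z - ψ z) (x * ψ'' x) x := by
      have h := ((hasDerivAt_id x).mul (hψd2 x hx)).sub (hψd x hx)
      exact h.congr_deriv (by simp only [id_eq]; ring)
    have hDd : HasDerivAt (fun z => z * φ' z - φ z) (x * φ'' x) x := by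
      have h := ((hasDerivAt_id x).mul (hφd2 x hx)).sub (hφd x hx)
      exact h.congr_deriv (by simp only [id_eq]; ring)
    have hq := hNd.div hDd (ne_of_lt (hD x hx))
    refine hq.congr_of_eventuallyEq ?_
    filter_upwards [Ioi_mem_nhds hx] with z hz
    exact hp z hz
  have hderneg : ∀ x ∈ interior (Set.Ici (0:ℝ)), deriv p x < 0 := by
    rw [interior_Ici]
    intro x hx
    have hx' : (0:ℝ) < x := hx
    rw [(hpder x hx').deriv]
    have hW : ψ x * φ' x - φ x * ψ' x < 0 := by
      nlinarith [hψpos x hx', hφpos x hx', hψinc x hx', hφdec x hx']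
    have hnum : x * ψ'' x * (x * φ' x - φ x) - (x * ψ' x - ψ x) * (x * φ'' x)
        = 2 * x^2 * g x * (ψ x * φ' x - φ x * ψ' x) := by
      linear_combination x * (x * φ' x - φ x) * hψode x hx' - x * (x * ψ' x - ψ x) * hφode x hx'
    rw [hnum]
    apply div_neg_of_neg_of_pos
    · have h1 : 0 < 2 * x^2 * g x := by
        have := hg x hx'
        positivity
      exact mul_neg_of_pos_of_neg h1 hW
    · nlinarith [hD x hx']
  have hcont : ContinuousOn p (Set.Ici 0) := by
    intro x hx
    rcases eq_or_lt_of_le (Set.mem_Ici.mp hx) with heq | hlt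
    · subst heq
      have hzero : Tendsto (fun z : ℝ => z) (nhdsWithin 0 (Set.Ioi 0)) (nhds 0) :=
        tendsto_id.mono_right nhdsWithin_le_nhds
      have hnum : Tendsto (fun z => z * ψ' z - ψ z) (nhdsWithin 0 (Set.Ioi 0))
          (nhds (0 * dψ - 1)) := (hzero.mul hdψ).sub hψ0
      have hden2 : Tendsto (fun z => z * φ' z - φ z) (nhdsWithin 0 (Set.Ioi 0))
          (nhds (0 * dφ - 1)) := (hzero.mul hdφ).sub hφ0
      have hq := hnum.div hden2 (by norm_num)
      have heqf : (fun z => (z * ψ' z - ψ z) / (z * φ' z - φ z))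
          =ᶠ[nhdsWithin (0:ℝ) (Set.Ioi 0)] p := by
        filter_upwards [self_mem_nhdsWithin] with z hz
        exact (hp z hz).symm
      have h1 : Tendsto p (nhdsWithin (0:ℝ) (Set.Ioi 0)) (nhds (p 0)) := by
        have h2 := hq.congr' heqf
        rw [hp0]
        convert h2 using 2
        norm_num
      have h0 : ContinuousWithinAt p (Set.Ioi 0) 0 := h1
      have := h0.insert
      rwa [Set.Ioi_insert] at this
    · exact (hpder x hlt).continuousAt.continuousWithinAt
  have hanti : StrictAntiOn p (Set.Ici 0) :=
    strictAntiOn_of_deriv_neg (convex_Ici 0) hcont hderneg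
  obtain ⟨z₀, hz₁, hz₂⟩ :=
    ((hptop.eventually (eventually_le_atBot K)).and (eventually_ge_atTop (0:ℝ))).exists
  have hKmem : K ∈ Set.Icc (p z₀) (p 0) := ⟨hz₁, by rw [hp0]; exact hKle⟩
  obtain ⟨A, hA, hpA⟩ := intermediate_value_Icc' hz₂
    (hcont.mono (Set.Icc_subset_Ici_self)) hKmem
  refine ⟨hKle, A, ⟨hA.1, hpA⟩, ?_⟩
  rintro B ⟨hB0, hpB⟩
  exact hanti.injOn hB0 hA.1 (hpB.trans hpA.symm)
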